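/- Let G be an acyclic directed graph and let π = [π₀, π₁, …, πₙ] be a pattern such that for each i < n there exists at least one path from πᵢ to πᵢ₊₁. Then the n-fold concatenation map sending (p₁, p₂, …, pₙ), with pᵢ a path from πᵢ₋₁ to πᵢ, to the concatenated path p₁ ⋆ p₂ ⋆ ⋯ ⋆ pₙ is a bijection from the product ∏_{i=1}^{n} (paths from πᵢ₋₁ to πᵢ) onto γ(π), the set of paths from π₀ to πₙ that pass through every πᵢ. -/

import Mathlib

universe v u

/-- A quiver (directed graph) is *acyclic* if for every vertex `a`, the only path from `a`
back to `a` is the nil path. -/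
def Quiver.IsAcyclic (V : Type*) [Quiver V] : Prop :=
  ∀ (a : V) (p : Quiver.Path a a), p = Quiver.Path.nil

/-- The list of vertices visited along a path, including both endpoints
(the starting vertex comes first). -/
def Quiver.Path.visitedVertices {V : Type*} [Quiver V] {a : V} :
    ∀ {b : V}, Quiver.Path a b → List V
  | _, Quiver.Path.nil => [a]
  | b, Quiver.Path.cons p _ => Quiver.Path.visitedVertices p ++ [b]

/-- A path *passes through* a vertex `w` if `w` is one of the vertices visited along it. -/
def Quiver.Path.PassesThrough {V : Type*} [Quiver V] {a b : V}
    (p : Quiver.Path a b) (w : V) : Prop :=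
  w ∈ p.visitedVertices

/-- Concatenation `p₁ ⋆ p₂ ⋆ ⋯ ⋆ pₙ` of a composable family of paths
`ps i : Path (π i) (π (i+1))` along a sequence of vertices `π`. -/
def Quiver.composePaths {V : Type u} [Quiver.{v + 1} V] :
    ∀ {n : ℕ} (π : Fin (n + 1) → V),
      (∀ i : Fin n, Quiver.Path (π i.castSucc) (π i.succ)) →
        Quiver.Path (π 0) (π (Fin.last n))
  | 0, _, _ => Quiver.Path.nil
  | n + 1, π, ps =>
      (Quiver.composePaths (fun i : Fin (n + 1) => π i.castSucc)
          (fun i : Fin n => ps i.castSucc)).comp (ps (Fin.last n))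

/-! In an acyclic quiver no vertex repeats along a path, so a path through `b` splits at `b` in
only one way; peeling off the last segment then gives injectivity by induction on `n`. For
surjectivity, split the path at `πₙ₋₁`. A pattern vertex `πᵢ` with `i < n` that is visited only by
the last segment would be reachable from `πₙ₋₁`, while `πₙ₋₁` is reachable from `πᵢ` along the
pattern, so acyclicity forces `πᵢ = πₙ₋₁`: the first segment passes through `π₀, …, πₙ₋₁`. -/

namespace Quiver

namespace Path

variable {V : Type*} [Quiver V]

theorem visitedVertices_eq_vertices {a b : V} (p : Path a b) : p.visitedVertices = p.vertices := by
  induction p with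
  | nil => rfl
  | cons p e ih => simp [visitedVertices, ih]

theorem passesThrough_iff_mem_vertices {a b w : V} (p : Path a b) :
    p.PassesThrough w ↔ w ∈ p.vertices := by
  rw [PassesThrough, visitedVertices_eq_vertices]

theorem mem_vertices_comp {a b c x : V} (p : Path a b) (q : Path b c) :
    x ∈ (p.comp q).vertices ↔ x ∈ p.vertices ∨ x ∈ q.vertices := by
  rw [vertices_comp, List.mem_append]
  refine ⟨Or.imp_left fun h => List.dropLast_subset _ h, Or.rec (fun h => ?_) Or.inr⟩
  rw [← p.dropLast_append_end_eq, List.mem_append, List.mem_singleton] at h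
  exact h.imp_right fun hb : x = b => hb ▸ q.start_mem_vertices

end Path

theorem reachable_of_le {V : Type*} [Quiver V] {n : ℕ} {π : Fin (n + 1) → V}
    (hπ : ∀ i : Fin n, Reachable (π i.castSucc) (π i.succ)) {i j : Fin (n + 1)} (hij : i ≤ j) :
    Reachable (π i) (π j) := by
  rcases hij.lt_or_eq with hij | rfl
  · exact (Fin.liftFun_iff_succ Reachable).mpr hπ hij
  · exact .rfl

namespace IsAcyclic

variable {V : Type*} [Quiver V]

theorem eq_of_reachable_of_reachable (hG : IsAcyclic V) {a b : V} (hab : Reachable a b)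
    (hba : Reachable b a) : a = b := by
  obtain ⟨p⟩ := hab
  obtain ⟨q⟩ := hba
  exact p.eq_of_length_zero (Path.nil_of_comp_eq_nil_left (hG a (p.comp q)))

theorem nodup_vertices (hG : IsAcyclic V) {a b : V} (p : Path a b) : p.vertices.Nodup := by
  induction p with
  | nil => simp
  | @cons b c p e ih =>
    refine (List.nodup_concat _ _).mpr ⟨fun hc => ?_, ih⟩
    obtain ⟨-, r, -⟩ := p.exists_eq_comp_of_mem_vertices hc
    exact Path.cons_ne_nil r e (hG c (r.cons e))

theorem comp_eq_comp_iff (hG : IsAcyclic V) {a b c : V} {q₁ q₂ : Path a b} {r₁ r₂ : Path b c} :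
    q₁.comp r₁ = q₂.comp r₂ ↔ q₁ = q₂ ∧ r₁ = r₂ := by
  refine ⟨fun h => (Path.comp_inj' ?_).mp h, fun ⟨h₁, h₂⟩ => h₁ ▸ h₂ ▸ rfl⟩
  have h₁ : (q₁.comp r₁).vertices[q₁.length]? = some b := by simp
  have h₂ : (q₁.comp r₁).vertices[q₂.length]? = some b := by rw [h]; simp
  exact (List.getElem?_inj (by simp) (hG.nodup_vertices _)).mp (h₁.trans h₂.symm)

end IsAcyclic

section composePaths

variable {V : Type u} [Quiver.{v + 1} V]

theorem composePaths_succ {n : ℕ} (π : Fin (n + 2) → V)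
    (ps : ∀ i : Fin (n + 1), Path (π i.castSucc) (π i.succ)) :
    composePaths π ps =
      (composePaths (fun i : Fin (n + 1) => π i.castSucc) fun i => ps i.castSucc).comp
        (ps (Fin.last n)) :=
  rfl

theorem mem_vertices_composePaths : ∀ {n : ℕ} (π : Fin (n + 1) → V)
    (ps : ∀ i : Fin n, Path (π i.castSucc) (π i.succ)) (i : Fin (n + 1)),
    π i ∈ (composePaths π ps).vertices
  | 0, π, ps, i => by
      rw [Fin.fin_one_eq_zero i]
      exact Path.start_mem_vertices _
  | n + 1, π, ps, i => by
      refine (Path.mem_vertices_comp _ _).mpr ?_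
      cases i using Fin.lastCases with
      | last => exact Or.inr (Path.end_mem_vertices _)
      | cast j => exact Or.inl (mem_vertices_composePaths _ _ j)

theorem composePaths_injective (hG : IsAcyclic V) : ∀ {n : ℕ} (π : Fin (n + 1) → V),
    Function.Injective (composePaths π)
  | 0, _ => fun _ _ _ => Subsingleton.elim _ _
  | n + 1, π => fun ps₁ ps₂ h => by
      replace h := hG.comp_eq_comp_iff.mp h
      have hinit := composePaths_injective hG _ h.1
      funext i
      cases i using Fin.lastCases with
      | last => exact h.2
      | cast j => exact congrFun hinit j

theorem exists_composePaths_eq (hG : IsAcyclic V) : ∀ {n : ℕ} (π : Fin (n + 1) → V),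
    (∀ i : Fin n, Reachable (π i.castSucc) (π i.succ)) → ∀ p : Path (π 0) (π (Fin.last n)),
    (∀ i, π i ∈ p.vertices) → ∃ ps, composePaths π ps = p
  | 0, π, _, p, _ => ⟨fun i => i.elim0, (hG _ p).symm⟩
  | n + 1, π, hπ, p, hp => by
      obtain ⟨q, r, rfl⟩ := p.exists_eq_comp_of_mem_vertices (hp (Fin.last n).castSucc)
      have hq : ∀ i : Fin (n + 1), π i.castSucc ∈ q.vertices := fun i => by
        rcases (Path.mem_vertices_comp q r).mp (hp i.castSucc) with hi | hi
        · exact hi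
        · obtain ⟨r₁, -, -⟩ := r.exists_eq_comp_of_mem_vertices hi
          have hle : i.castSucc ≤ (Fin.last n).castSucc :=
            Fin.castSucc_le_castSucc_iff.mpr i.le_last
          rw [hG.eq_of_reachable_of_reachable (reachable_of_le hπ hle) r₁.reachable]
          exact q.end_mem_vertices
      obtain ⟨ps, hps⟩ := exists_composePaths_eq hG (fun i : Fin (n + 1) => π i.castSucc)
        (fun i => hπ i.castSucc) q hq
      refine ⟨Fin.snoc ps r, ?_⟩
      rw [composePaths_succ]
      simp only [Fin.snoc_castSucc, Fin.snoc_last]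
      exact congrArg (·.comp r) hps

theorem range_composePaths (hG : IsAcyclic V) {n : ℕ} (π : Fin (n + 1) → V)
    (hπ : ∀ i : Fin n, Reachable (π i.castSucc) (π i.succ)) :
    Set.range (composePaths π) = {p | ∀ i, π i ∈ p.vertices} :=
  Set.ext fun p => ⟨by rintro ⟨ps, rfl⟩; exact mem_vertices_composePaths π ps,
    exists_composePaths_eq hG π hπ p⟩

end composePaths

end Quiver

/-- Let `π = [π₀, …, πₙ]` be a pattern in an acyclic directed graph, i.e. a sequence of
vertices such that each adjacent pair is joined by at least one path. Then the `n`-fold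
concatenation map `(p₁, …, pₙ) ↦ p₁ ⋆ ⋯ ⋆ pₙ` is injective on the product of the sets of
paths from `πᵢ₋₁` to `πᵢ`, and its range is exactly `γ(π)`, the set of paths from `π₀` to
`πₙ` that pass through every `πᵢ`; i.e. it is a bijection onto `γ(π)`. -/
theorem composePaths_bijective_onto_pattern {V : Type u} [Quiver.{v + 1} V]
    (hG : Quiver.IsAcyclic V) {n : ℕ} (π : Fin (n + 1) → V)
    (hπ : ∀ i : Fin n, Nonempty (Quiver.Path (π i.castSucc) (π i.succ))) :
    Function.Injective
        (fun ps : ∀ i : Fin n, Quiver.Path (π i.castSucc) (π i.succ) =>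
          Quiver.composePaths π ps) ∧
      Set.range
          (fun ps : ∀ i : Fin n, Quiver.Path (π i.castSucc) (π i.succ) =>
            Quiver.composePaths π ps)
        = {p : Quiver.Path (π 0) (π (Fin.last n)) |
            ∀ i : Fin (n + 1), p.PassesThrough (π i)} := by
  refine ⟨Quiver.composePaths_injective hG π, ?_⟩
  simp only [Quiver.Path.passesThrough_iff_mem_vertices]
  exact Quiver.range_composePaths hG π hπ
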